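/- If G = K_{n_1,…,n_k} is a complete k-partite graph with k > 2 and the two largest part sizes both at least 2, then mvd(G) = 1. -/

import Mathlib

open SimpleGraph

variable {V : Type*}

/-- `S` is a set of vertices (not containing `x` or `y`) whose removal separates `x` from `y`:
every walk from `x` to `y` meets `S`. -/
def IsSepSet (G : SimpleGraph V) (S : Set V) (x y : V) : Prop :=
  x ∉ S ∧ y ∉ S ∧ ∀ p : G.Walk x y, ∃ v ∈ p.support, v ∈ S

/-- `τ` is an MVD-coloring of `G`: every pair of distinct nonadjacent vertices is
separated by a monochromatic vertex cut. -/
def IsMVDColoring (G : SimpleGraph V) (τ : V → ℕ) : Prop :=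
  ∀ x y : V, x ≠ y → ¬ G.Adj x y →
    ∃ S : Set V, IsSepSet G S x y ∧ ∀ u ∈ S, ∀ w ∈ S, τ u = τ w

/-- The monochromatic vertex-disconnection number: the maximum number of colors
used by an MVD-coloring of `G`. -/
noncomputable def mvd (G : SimpleGraph V) : ℕ :=
  sSup {k | ∃ τ : V → ℕ, IsMVDColoring G τ ∧ (Set.range τ).ncard = k}

/-!
If a part `P` of a complete multipartite graph has two vertices `x ≠ y`, every vertex `v`
outside `P` is adjacent to both, so the walk `x, v, y` forces `v` into any `x`–`y` separating
set; hence an MVD-coloring is constant off `P`. With two such parts `P_i`, `P_j` and a third,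
nonempty part, the two color classes "off `P_i`" and "off `P_j`" cover all vertices and share a
vertex of the third part, so the coloring is constant. The constant coloring is always an
MVD-coloring, so `mvd = 1`.
-/

section

variable {G : SimpleGraph V}

lemma IsSepSet.mem_of_adj_of_adj {S : Set V} {x y v : V} (hS : IsSepSet G S x y)
    (hxv : G.Adj x v) (hvy : G.Adj v y) : v ∈ S := by
  obtain ⟨hxS, hyS, hsep⟩ := hS
  obtain ⟨w, hw, hwS⟩ := hsep (.cons hxv (.cons hvy .nil))
  simp only [Walk.support_cons, Walk.support_nil, List.mem_cons,
    List.not_mem_nil, or_false] at hw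
  rcases hw with rfl | rfl | rfl
  exacts [absurd hwS hxS, hwS, absurd hwS hyS]

lemma isSepSet_compl_pair {x y : V} (hxy : x ≠ y) (hadj : ¬ G.Adj x y) :
    IsSepSet G {x, y}ᶜ x y := by
  refine ⟨by simp, by simp, fun p => ?_⟩
  cases p with
  | nil => exact absurd rfl hxy
  | cons h q =>
    refine ⟨_, List.mem_cons_of_mem _ q.start_mem_support, ?_⟩
    simp only [Set.mem_compl_iff, Set.mem_insert_iff, Set.mem_singleton_iff, not_or]
    exact ⟨h.ne.symm, fun hy => hadj (hy ▸ h)⟩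

lemma isMVDColoring_const (G : SimpleGraph V) (c : ℕ) : IsMVDColoring G fun _ => c :=
  fun _ _ hxy hadj => ⟨_, isSepSet_compl_pair hxy hadj, fun _ _ _ _ => rfl⟩

lemma mvd_eq_one_of_isMVDColoring_const [Nonempty V]
    (h : ∀ τ, IsMVDColoring G τ → ∀ u v, τ u = τ v) : mvd G = 1 := by
  suffices {k | ∃ τ : V → ℕ, IsMVDColoring G τ ∧ (Set.range τ).ncard = k} = {1} by
    rw [mvd, this, csSup_singleton]
  ext m
  constructor
  · rintro ⟨τ, hτ, rfl⟩
    obtain ⟨w⟩ := ‹Nonempty V›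
    have : Set.range τ = {τ w} :=
      Set.eq_singleton_iff_unique_mem.2 ⟨⟨w, rfl⟩, by rintro _ ⟨u, rfl⟩; exact h τ hτ u w⟩
    rw [this, Set.ncard_singleton, Set.mem_singleton_iff]
  · rintro rfl
    exact ⟨fun _ => 0, isMVDColoring_const G 0, by simp [Set.range_const]⟩

end

section

variable {ι : Type*} {α : ι → Type*}

lemma IsMVDColoring.completeMultipartite_apply_eq_of_fst_ne {τ : (Σ l, α l) → ℕ}
    (hτ : IsMVDColoring (completeMultipartiteGraph α) τ) {i : ι} [Nontrivial (α i)]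
    {u v : Σ l, α l} (hu : u.1 ≠ i) (hv : v.1 ≠ i) : τ u = τ v := by
  obtain ⟨a, b, hab⟩ := exists_pair_ne (α i)
  have hxy : (⟨i, a⟩ : Σ l, α l) ≠ ⟨i, b⟩ := fun h => hab (eq_of_heq (Sigma.mk.inj h).2)
  obtain ⟨S, hS, hmono⟩ := hτ _ _ hxy fun h => h rfl
  exact hmono u (hS.mem_of_adj_of_adj hu.symm hu) v (hS.mem_of_adj_of_adj hv.symm hv)

lemma IsMVDColoring.completeMultipartite_apply_eq {τ : (Σ l, α l) → ℕ}
    (hτ : IsMVDColoring (completeMultipartiteGraph α) τ) {i j l : ι} (hij : i ≠ j)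
    (hli : l ≠ i) (hlj : l ≠ j) [Nontrivial (α i)] [Nontrivial (α j)] [Nonempty (α l)]
    (u v : Σ l, α l) : τ u = τ v := by
  obtain ⟨c⟩ := ‹Nonempty (α l)›
  have hτc : ∀ w : Σ l, α l, τ w = τ ⟨l, c⟩ := fun w => by
    by_cases hw : w.1 = i
    · exact completeMultipartite_apply_eq_of_fst_ne (i := j) hτ (hw ▸ hij) hlj
    · exact completeMultipartite_apply_eq_of_fst_ne (i := i) hτ hw hli
  rw [hτc u, hτc v]

end

theorem mvd_complete_multipartite (k : ℕ) (hk : 2 < k) (n : Fin k → ℕ)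
    (hpos : ∀ i, 1 ≤ n i) (i j : Fin k) (hij : i ≠ j)
    (hi : 2 ≤ n i) (hj : 2 ≤ n j) :
    mvd (completeMultipartiteGraph (fun i => Fin (n i))) = 1 := by
  obtain ⟨l, hli, hlj⟩ := Fin.exists_ne_and_ne_of_two_lt i j hk
  have : Nontrivial (Fin (n i)) := Fin.nontrivial_iff_two_le.2 hi
  have : Nontrivial (Fin (n j)) := Fin.nontrivial_iff_two_le.2 hj
  have : Nonempty (Fin (n l)) := ⟨⟨0, hpos l⟩⟩
  have : Nonempty (Σ l, Fin (n l)) := ⟨⟨l, 0, hpos l⟩⟩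
  exact mvd_eq_one_of_isMVDColoring_const fun τ hτ => hτ.completeMultipartite_apply_eq hij hli hlj
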